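/- Let E be a finite-dimensional real inner product space and K ≥ 1. Let T ≥ 1 and for each t ∈ Fin T let z_t : E → EuclideanSpace ℝ (Fin K) be differentiable at θ with ‖Dz_t(θ)‖ ≤ M, and let q_t be a probability vector on Fin K. Define the sequence loss ℓ(ψ) = (1/T)·∑_t CE(q_t‖softmax(z_t(ψ))). Then ℓ is differentiable at θ and ‖∇ℓ(θ)‖ ≤ M·√(2·ℓ(θ)). -/

import Mathlib

/-- `softmax(z)_i = exp(z_i) / ∑_j exp(z_j)`. -/
noncomputable def softmax {K : ℕ} (z : EuclideanSpace ℝ (Fin K)) : Fin K → ℝ :=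
  fun i => Real.exp (z i) / ∑ j, Real.exp (z j)

/-- Cross-entropy `CE(q‖p) = −∑_i q_i·log p_i`. -/
noncomputable def crossEntropy {K : ℕ} (q p : Fin K → ℝ) : ℝ :=
  -∑ i, q i * Real.log (p i)

/-!
As a function of the logits, `CE(q‖softmax z) = log ∑ⱼ exp zⱼ - ∑ᵢ qᵢ zᵢ` has gradient
`softmax z - q`, so by the chain rule the gradient of each token's loss has norm at most
`M ‖softmax zₜ - qₜ‖`. For `p, q ∈ [0, 1]` one has `(p - q)² ≤ p + q - 2pq` and
`q (1 - p) ≤ -q log p`, which for probability vectors sum to `‖p - q‖² ≤ 2 CE(q‖p)`.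
Finally the mean of `‖softmax zₜ - qₜ‖` over the tokens is at most its quadratic mean,
which is at most `√(2ℓ)`.
-/

open Finset Real

lemma nonempty_of_sum_eq_one {ι : Type*} [Fintype ι] {q : ι → ℝ} (hq : ∑ i, q i = 1) :
    Nonempty ι := by
  by_contra h
  simp [not_nonempty_iff.mp h] at hq

lemma div_card_le_sqrt_sum_sq_div_card {ι : Type*} (s : Finset ι) (f : ι → ℝ) :
    (∑ i ∈ s, f i) / #s ≤ √((∑ i ∈ s, f i ^ 2) / #s) := by
  refine (le_abs_self _).trans (abs_le_sqrt ?_)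
  rcases (Nat.cast_nonneg (α := ℝ) #s).eq_or_lt with hs | hs
  · simp [← hs]
  · rw [div_pow, sq (#s : ℝ), ← div_div]
    gcongr
    rw [div_le_iff₀' hs]
    exact sq_sum_le_card_mul_sum_sq

lemma sum_sq_sub_le_two_mul_crossEntropy {K : ℕ} {p q : Fin K → ℝ}
    (hp0 : ∀ i, 0 < p i) (hp1 : ∑ i, p i = 1) (hq0 : ∀ i, 0 ≤ q i) (hq1 : ∑ i, q i = 1) :
    ∑ i, (p i - q i) ^ 2 ≤ 2 * crossEntropy q p := by
  have hp_le : ∀ i, p i ≤ 1 := fun i =>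
    hp1 ▸ single_le_sum (fun j _ => (hp0 j).le) (mem_univ i)
  have hq_le : ∀ i, q i ≤ 1 := fun i => hq1 ▸ single_le_sum (fun j _ => hq0 j) (mem_univ i)
  calc ∑ i, (p i - q i) ^ 2 ≤ ∑ i, (p i + q i - 2 * (q i * p i)) := by
        gcongr with i
        nlinarith [mul_nonneg (hp0 i).le (sub_nonneg.2 (hp_le i)),
          mul_nonneg (hq0 i) (sub_nonneg.2 (hq_le i))]
    _ = 2 * ∑ i, q i * (1 - p i) := by
        simp only [mul_one_sub, sum_sub_distrib, sum_add_distrib, ← mul_sum, hp1, hq1]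
        ring
    _ ≤ 2 * ∑ i, q i * -log (p i) := by
        gcongr with i
        · exact hq0 i
        · linarith [log_le_sub_one_of_pos (hp0 i)]
    _ = 2 * crossEntropy q p := by simp [crossEntropy, sum_neg_distrib]

section softmax

variable {K : ℕ}

lemma sum_exp_pos [Nonempty (Fin K)] (v : EuclideanSpace ℝ (Fin K)) : 0 < ∑ j, exp (v j) :=
  sum_pos (fun _ _ => exp_pos _) univ_nonempty

lemma softmax_pos [Nonempty (Fin K)] (v : EuclideanSpace ℝ (Fin K)) (i : Fin K) :
    0 < softmax v i :=
  div_pos (exp_pos _) (sum_exp_pos v)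

lemma sum_softmax [Nonempty (Fin K)] (v : EuclideanSpace ℝ (Fin K)) : ∑ i, softmax v i = 1 := by
  simp only [softmax, ← sum_div, div_self (sum_exp_pos v).ne']

lemma crossEntropy_softmax [Nonempty (Fin K)] {q : Fin K → ℝ} (hq : ∑ i, q i = 1)
    (v : EuclideanSpace ℝ (Fin K)) :
    crossEntropy q (softmax v) = log (∑ j, exp (v j)) - ∑ i, q i * v i := by
  simp only [crossEntropy, softmax, log_div (exp_pos _).ne' (sum_exp_pos v).ne', log_exp,
    mul_sub, sum_sub_distrib, ← sum_mul, hq]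
  ring

lemma hasFDerivAt_crossEntropy_softmax {q : Fin K → ℝ} (hq : ∑ i, q i = 1)
    (v : EuclideanSpace ℝ (Fin K)) :
    HasFDerivAt (fun v => crossEntropy q (softmax v))
      (innerSL ℝ (WithLp.toLp 2 (softmax v - q))) v := by
  have : Nonempty (Fin K) := nonempty_of_sum_eq_one hq
  have hproj : ∀ j, HasFDerivAt (fun v : EuclideanSpace ℝ (Fin K) => v j)
      (EuclideanSpace.proj j : EuclideanSpace ℝ (Fin K) →L[ℝ] ℝ) v := fun j =>
    (EuclideanSpace.proj (𝕜 := ℝ) (ι := Fin K) j).hasFDerivAt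
  have hlse := (HasFDerivAt.fun_sum fun j _ => (hproj j).exp).log (sum_exp_pos v).ne'
  have hlin := HasFDerivAt.fun_sum fun i (_ : i ∈ univ) => (hproj i).const_mul (q i)
  simp only [funext (crossEntropy_softmax hq)]
  refine (hlse.sub hlin).congr_fderiv ?_
  ext w
  simp only [sub_apply, smul_apply, _root_.sum_apply, PiLp.proj_apply, smul_eq_mul, mul_sum,
    WithLp.toLp_sub, map_sub, coe_innerSL_apply, PiLp.inner_apply, softmax, RCLike.inner_apply,
    map_div₀, ringHom_apply, map_sum]
  congr 1 <;> exact sum_congr rfl fun i _ => by ring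

end softmax

theorem sequence_crossEntropy_gradient_bound_general
    {E : Type*} [NormedAddCommGroup E] [InnerProductSpace ℝ E] [FiniteDimensional ℝ E]
    {K : ℕ}
    (T : ℕ)
    (z : Fin T → E → EuclideanSpace ℝ (Fin K)) (θ : E) (M : ℝ) (hM : 0 ≤ M)
    (hz : ∀ t, DifferentiableAt ℝ (z t) θ) (hDz : ∀ t, ‖fderiv ℝ (z t) θ‖ ≤ M)
    (q : Fin T → Fin K → ℝ) (hq0 : ∀ t i, 0 ≤ q t i) (hq1 : ∀ t, ∑ i, q t i = 1)
    (ℓ : E → ℝ)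
    (hℓ : ℓ = fun ψ => (1 / (T : ℝ)) * ∑ t, crossEntropy (q t) (softmax (z t ψ))) :
    DifferentiableAt ℝ ℓ θ ∧
      ‖gradient ℓ θ‖ ≤ M * Real.sqrt (2 * ℓ θ) := by
  set g : Fin T → EuclideanSpace ℝ (Fin K) := fun t => WithLp.toLp 2 (softmax (z t θ) - q t)
  have hL : HasFDerivAt ℓ ((1 / (T : ℝ)) • ∑ t, (innerSL ℝ (g t)).comp (fderiv ℝ (z t) θ)) θ := by
    rw [hℓ]
    exact (HasFDerivAt.fun_sum fun t _ =>
      (hasFDerivAt_crossEntropy_softmax (hq1 t) _).comp θ (hz t).hasFDerivAt).const_mul _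
  have hg : ∀ t, ‖g t‖ ^ 2 ≤ 2 * crossEntropy (q t) (softmax (z t θ)) := fun t => by
    have : Nonempty (Fin K) := nonempty_of_sum_eq_one (hq1 t)
    rw [EuclideanSpace.real_norm_sq_eq]
    exact sum_sq_sub_le_two_mul_crossEntropy (softmax_pos _) (sum_softmax _) (hq0 t) (hq1 t)
  refine ⟨hL.differentiableAt, ?_⟩
  rw [gradient, LinearIsometryEquiv.norm_map, hL.fderiv]
  calc ‖(1 / (T : ℝ)) • ∑ t, (innerSL ℝ (g t)).comp (fderiv ℝ (z t) θ)‖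
      ≤ (1 / T) * ∑ t, M * ‖g t‖ := by
        rw [norm_smul, Real.norm_of_nonneg (by positivity)]
        gcongr
        refine (norm_sum_le _ _).trans (sum_le_sum fun t _ => ?_)
        calc _ ≤ ‖innerSL ℝ (g t)‖ * ‖fderiv ℝ (z t) θ‖ := ContinuousLinearMap.opNorm_comp_le _ _
          _ ≤ M * ‖g t‖ := by rw [innerSL_apply_norm, mul_comm]; gcongr; exact hDz t
    _ = M * ((∑ t, ‖g t‖) / T) := by rw [← mul_sum]; ring
    _ ≤ M * √((∑ t, ‖g t‖ ^ 2) / T) := by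
        gcongr
        simpa using div_card_le_sqrt_sum_sq_div_card univ fun t => ‖g t‖
    _ ≤ M * √(2 * ℓ θ) := by
        gcongr
        calc (∑ t, ‖g t‖ ^ 2) / T ≤ (∑ t, 2 * crossEntropy (q t) (softmax (z t θ))) / T := by
              gcongr with t; exact hg t
          _ = 2 * ℓ θ := by simp only [hℓ, ← mul_sum]; ring

/-- **Sequence-level gradient bound.** The token-averaged softmax cross-entropy loss
`ℓ(ψ) = (1/T)·∑_t CE(q_t ‖ softmax(z_t(ψ)))` is differentiable at `θ` and its gradient
norm is bounded by `M·√(2·ℓ(θ))`. -/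
theorem sequence_crossEntropy_gradient_bound
    {E : Type*} [NormedAddCommGroup E] [InnerProductSpace ℝ E] [FiniteDimensional ℝ E]
    {K : ℕ} (hK : 1 ≤ K)
    (T : ℕ) (hT : 1 ≤ T)
    (z : Fin T → E → EuclideanSpace ℝ (Fin K)) (θ : E) (M : ℝ) (hM : 0 ≤ M)
    (hz : ∀ t, DifferentiableAt ℝ (z t) θ) (hDz : ∀ t, ‖fderiv ℝ (z t) θ‖ ≤ M)
    (q : Fin T → Fin K → ℝ) (hq0 : ∀ t i, 0 ≤ q t i) (hq1 : ∀ t, ∑ i, q t i = 1)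
    (ℓ : E → ℝ)
    (hℓ : ℓ = fun ψ => (1 / (T : ℝ)) * ∑ t, crossEntropy (q t) (softmax (z t ψ))) :
    DifferentiableAt ℝ ℓ θ ∧
      ‖gradient ℓ θ‖ ≤ M * Real.sqrt (2 * ℓ θ) :=
  sequence_crossEntropy_gradient_bound_general T z θ M hM hz hDz q hq0 hq1 ℓ hℓ
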